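/- arXiv:1805.04382 — 2 statements merged into one kernel-verified Lean document; each statement's English description precedes it below -/
import Mathlib

section
/- Let φ be a stability function on an abelian length category A and p an element of the totally ordered set P of phases. Then the full subcategory T_p = {M ∈ A : the maximally destabilizing quotient M' of M satisfies φ(M') ≥ p} (together with the zero object) is closed under quotients and extensions, i.e., T_p is a torsion class in A. -/
open CategoryTheory CategoryTheory.Limits

universe u v

variable {C : Type u} [Category.{v} C] [Abelian C] {P : Type*} [LinearOrder P]

/-- The see-saw property for a stability function, on short exact sequences of nonzero objects. -/
def SeeSaw (φ : C → P) : Prop :=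
  ∀ S : ShortComplex C, S.ShortExact →
    ¬ IsZero S.X₁ → ¬ IsZero S.X₂ → ¬ IsZero S.X₃ →
    (φ S.X₁ < φ S.X₂ ∧ φ S.X₂ < φ S.X₃) ∨
    (φ S.X₃ < φ S.X₂ ∧ φ S.X₂ < φ S.X₁) ∨
    (φ S.X₁ = φ S.X₂ ∧ φ S.X₂ = φ S.X₃)

/-- A stability function is constant on isomorphism classes. -/
def IsoInvariant (φ : C → P) : Prop := ∀ ⦃M N : C⦄, (M ≅ N) → φ M = φ N

/-- `M` is φ-semistable: every nonzero proper subobject has phase ≤ φ M. -/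
def Semistable (φ : C → P) (M : C) : Prop :=
  ∀ ⦃L : C⦄ (i : L ⟶ M), Mono i → ¬ IsZero L → ¬ IsIso i → φ L ≤ φ M

/-- `M` is φ-stable: every nonzero proper subobject has phase < φ M. -/
def Stable (φ : C → P) (M : C) : Prop :=
  ∀ ⦃L : C⦄ (i : L ⟶ M), Mono i → ¬ IsZero L → ¬ IsIso i → φ L < φ M

/-- `(N, q)` is a maximally destabilizing quotient of `M`. -/
def IsMDQ (φ : C → P) {M N : C} (q : M ⟶ N) : Prop :=
  Epi q ∧ ¬ IsZero N ∧ φ N ≤ φ M ∧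
    ∀ ⦃N' : C⦄ (q' : M ⟶ N'), Epi q' → ¬ IsZero N' →
      φ N ≤ φ N' ∧ (φ N' = φ N → ∃ f : N ⟶ N', q' = q ≫ f)

/-- Membership in `T_p`: zero, or the maximally destabilizing quotient has phase `≥ p`. -/
def TpMDQ (φ : C → P) (p : P) (M : C) : Prop :=
  IsZero M ∨ ∃ (N : C) (q : M ⟶ N), IsMDQ φ q ∧ p ≤ φ N

/-!
The phase of the maximally destabilizing quotient of `M` is the least phase of a nonzero quotient
of `M`, so `M ∈ T_p` exactly when every nonzero quotient of `M` has phase `≥ p`; this passes to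
quotients. Moreover the maximally destabilizing quotient `N` is semistable, by the see-saw property.
For an extension `0 → X₁ → X₂ → X₃ → 0` and the maximally destabilizing quotient `q : X₂ ⟶ N`,
either `q` kills `X₁`, so that `N` is a quotient of `X₃`, or the image of `X₁` in `N` is a nonzero
quotient of `X₁` inside the semistable `N`, whence `p ≤ φ (image) ≤ φ N`.
-/

namespace IsMDQ

variable {φ : C → P} {M N : C} {q : M ⟶ N}

omit [Abelian C] in
lemma le_of_epi (hq : IsMDQ φ q) {N' : C} (q' : M ⟶ N') [Epi q'] (hN' : ¬ IsZero N') :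
    φ N ≤ φ N' :=
  (hq.2.2.2 q' inferInstance hN').1

/-- A proper nonzero subobject `K ⊆ N` of phase `> φ N` would, by the see-saw property, give
the quotient `N / K` of `M` a phase `< φ N`. -/
lemma semistable (hss : SeeSaw φ) (hq : IsMDQ φ q) : Semistable φ N := by
  intro K m _ hK hm
  have := hq.1
  have hcoker : ¬ IsZero (cokernel m) := fun hz ↦ hm <| by
    have : Epi m := Abelian.epi_of_cokernel_π_eq_zero m (hz.eq_of_tgt _ _)
    exact isIso_of_mono_of_epi m
  have hNc : φ N ≤ φ (cokernel m) := hq.le_of_epi (q ≫ cokernel.π m) hcoker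
  have hse : (ShortComplex.mk m (cokernel.π m) (cokernel.condition m)).ShortExact :=
    { exact := ShortComplex.exact_cokernel m }
  rcases hss _ hse hK hq.2.1 hcoker with ⟨hlt, -⟩ | ⟨hlt, -⟩ | ⟨heq, -⟩
  · exact hlt.le
  · exact absurd hlt hNc.not_gt
  · exact heq.le

end IsMDQ

namespace TpMDQ

variable {φ : C → P} {p : P}

omit [Abelian C] in
lemma of_forall_isMDQ (hMDQ : ∀ M : C, ¬ IsZero M → ∃ (N : C) (q : M ⟶ N), IsMDQ φ q) {M : C}
    (h : ∀ (N : C) (q : M ⟶ N), IsMDQ φ q → p ≤ φ N) : TpMDQ φ p M := by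
  by_cases hM : IsZero M
  · exact Or.inl hM
  · obtain ⟨N, q, hq⟩ := hMDQ M hM
    exact Or.inr ⟨N, q, hq, h N q hq⟩

omit [Abelian C] in
lemma le_of_epi [HasZeroMorphisms C] {M N : C} (hM : TpMDQ φ p M) (g : M ⟶ N) [Epi g]
    (hN : ¬ IsZero N) : p ≤ φ N := by
  rcases hM with hM | ⟨M', q, hq, hp⟩
  · exact absurd (hM.of_epi g) hN
  · exact hp.trans (hq.le_of_epi g hN)

lemma le_of_semistable {X N : C} (hX : TpMDQ φ p X) (hN : Semistable φ N) (h : X ⟶ N)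
    (h0 : h ≠ 0) : p ≤ φ N := by
  have hfac : Abelian.factorThruImage h ≫ Abelian.image.ι h = h := Abelian.image.fac h
  have hK : ¬ IsZero (Abelian.image h) := fun hz ↦ h0 <| by
    rw [← hfac, hz.eq_zero_of_tgt (Abelian.factorThruImage h), zero_comp]
  by_cases hι : IsIso (Abelian.image.ι h)
  · have : Epi h := by rw [← hfac]; infer_instance
    exact hX.le_of_epi h fun hz ↦ h0 (hz.eq_zero_of_tgt h)
  · exact (hX.le_of_epi (Abelian.factorThruImage h) hK).trans (hN _ inferInstance hK hι)

end TpMDQ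

/-- The class `T_p` is closed under quotients and extensions, i.e. it is a torsion class. -/
theorem Tp_is_torsion_class {C : Type u} [Category.{v} C] [Abelian C]
    [∀ X : C, IsNoetherianObject X] [∀ X : C, IsArtinianObject X]
    {P : Type*} [LinearOrder P] (φ : C → P)
    (hss : SeeSaw φ) (hiso : IsoInvariant φ)
    (hMDQ : ∀ M : C, ¬ IsZero M → ∃ (N : C) (q : M ⟶ N), IsMDQ φ q)
    (p : P) :
    (∀ ⦃M N : C⦄ (g : M ⟶ N), Epi g → TpMDQ φ p M → TpMDQ φ p N) ∧
    (∀ S : ShortComplex C, S.ShortExact →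
      TpMDQ φ p S.X₁ → TpMDQ φ p S.X₃ → TpMDQ φ p S.X₂) := by
  refine ⟨fun M N g _ hM ↦ .of_forall_isMDQ hMDQ fun N' q hq ↦ ?_,
    fun S hS h₁ h₃ ↦ .of_forall_isMDQ hMDQ fun N q hq ↦ ?_⟩
  · have := hq.1
    exact hM.le_of_epi (g ≫ q) hq.2.1
  · by_cases h0 : S.f ≫ q = 0
    · have := hS.epi_g
      have := hq.1
      obtain ⟨q₃, hq₃⟩ := hS.exact.desc' q h0
      have : Epi q₃ := epi_of_epi_fac hq₃
      exact h₃.le_of_epi q₃ hq.2.1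
    · exact h₁.le_of_semistable (hq.semistable hss) _ h0
end

section
/- Let φ be a stability function on an abelian length category A and p ∈ P. Then the full subcategory A_p consisting of the zero object and the φ-semistable objects of phase exactly p is a wide (i.e., exact abelian, closed under extensions, kernels and cokernels) subcategory of A. -/
open CategoryTheory CategoryTheory.Limits

universe u v

variable {C : Type u} [Category.{v} C] [Abelian C] {P : Type*} [LinearOrder P]

/-- The class `A_p` of the zero objects and the φ-semistable objects of phase exactly `p`. -/
def Ap {C : Type u} [Category.{v} C] [Abelian C] {P : Type*} [LinearOrder P]
    (φ : C → P) (p : P) (M : C) : Prop :=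
  IsZero M ∨ (Semistable φ M ∧ φ M = p)

/-!
An object lies in `A_p` exactly when it is zero or of phase `≥ p`, and each of its subobjects is
zero or of phase `≤ p`. Away from zero terms, the see-saw property turns the phase bounds on two
terms of a short exact sequence into a bound on the third. So each closure property is one such
step: `ker f ↪ M ↠ coim f` for kernels; `im f ↪ N ↠ coker f` and `L ↪ coker f ↠ coker (L → coker f)`
for cokernels; and for a subobject `L` of an extension `X₁ ↪ X₂ ↠ X₃`, the sequence
`ker (L → X₃) ↪ L ↠ coim (L → X₃)`, whose outer terms are subobjects of `X₁` and `X₃`.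
-/

lemma shortExact_cokernel {A B : C} (i : A ⟶ B) [Mono i] :
    (ShortComplex.mk i (cokernel.π i) (cokernel.condition i)).ShortExact where
  exact := ShortComplex.exact_of_g_is_cokernel _ (cokernelIsCokernel i)

lemma shortExact_kernel {A B : C} (e : A ⟶ B) [Epi e] :
    (ShortComplex.mk (kernel.ι e) e (kernel.condition e)).ShortExact where
  exact := ShortComplex.exact_of_f_is_kernel _ (kernelIsKernel e)

def PhaseLE (φ : C → P) (p : P) (X : C) : Prop := IsZero X ∨ φ X ≤ p

/-- Definitionally `PhaseLE (toDual ∘ φ) (toDual p)`: lemmas about `PhaseLE`, applied to the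
order-dual stability function, give their mirror images for `PhaseGE`. -/
def PhaseGE (φ : C → P) (p : P) (X : C) : Prop := IsZero X ∨ p ≤ φ X

open OrderDual

section

variable {φ : C → P} {p : P}

lemma SeeSaw.toDual (hss : SeeSaw φ) : SeeSaw (toDual ∘ φ) := fun S hS h₁ h₂ h₃ => by
  rcases hss S hS h₁ h₂ h₃ with h | h | h
  exacts [Or.inr (Or.inl ⟨h.2, h.1⟩), Or.inl ⟨h.2, h.1⟩, Or.inr (Or.inr (by simp [h]))]

omit [Abelian C] [LinearOrder P] in
lemma IsoInvariant.toDual (hiso : IsoInvariant φ) : IsoInvariant (toDual ∘ φ) :=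
  fun _ _ e => by simp [hiso e]

omit [Abelian C] in
lemma PhaseLE.of_iso (hiso : IsoInvariant φ) {X Y : C} (h : PhaseLE φ p X) (e : X ≅ Y) :
    PhaseLE φ p Y :=
  h.imp (fun hX => hX.of_iso e.symm) (fun hX => (hiso e).symm.trans_le hX)

omit [Abelian C] in
lemma PhaseGE.of_iso (hiso : IsoInvariant φ) {X Y : C} (h : PhaseGE φ p X) (e : X ≅ Y) :
    PhaseGE φ p Y :=
  PhaseLE.of_iso (φ := toDual ∘ φ) hiso.toDual h e

section ShortExact

variable (hss : SeeSaw φ) (hiso : IsoInvariant φ) {S : ShortComplex C} (hS : S.ShortExact)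
include hss hiso hS

lemma SeeSaw.phaseLE_X₂ (h₁ : PhaseLE φ p S.X₁) (h₃ : PhaseLE φ p S.X₃) :
    PhaseLE φ p S.X₂ := by
  by_cases z₁ : IsZero S.X₁
  · have := hS.isIso_g_iff.2 z₁
    exact h₃.of_iso hiso (asIso S.g).symm
  by_cases z₃ : IsZero S.X₃
  · have := hS.isIso_f_iff.2 z₃
    exact h₁.of_iso hiso (asIso S.f)
  by_cases z₂ : IsZero S.X₂
  · exact Or.inl z₂
  have h₁ := h₁.resolve_left z₁
  have h₃ := h₃.resolve_left z₃
  right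
  rcases hss S hS z₁ z₂ z₃ with h | h | h <;> order

lemma SeeSaw.phaseGE_X₁ (h₂ : PhaseGE φ p S.X₂) (h₃ : PhaseLE φ p S.X₃) :
    PhaseGE φ p S.X₁ := by
  by_cases z₁ : IsZero S.X₁
  · exact Or.inl z₁
  by_cases z₃ : IsZero S.X₃
  · have := hS.isIso_f_iff.2 z₃
    exact h₂.of_iso hiso (asIso S.f).symm
  have z₂ : ¬ IsZero S.X₂ := fun h => z₁ (have := hS.mono_f; h.of_mono S.f)
  have h₂ := h₂.resolve_left z₂
  have h₃ := h₃.resolve_left z₃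
  right
  rcases hss S hS z₁ z₂ z₃ with h | h | h <;> order

lemma SeeSaw.phaseGE_X₃ (h₁ : PhaseLE φ p S.X₁) (h₂ : PhaseGE φ p S.X₂) :
    PhaseGE φ p S.X₃ := by
  by_cases z₃ : IsZero S.X₃
  · exact Or.inl z₃
  by_cases z₁ : IsZero S.X₁
  · have := hS.isIso_g_iff.2 z₁
    exact h₂.of_iso hiso (asIso S.g)
  have z₂ : ¬ IsZero S.X₂ := fun h => z₃ (have := hS.epi_g; h.of_epi S.g)
  have h₁ := h₁.resolve_left z₁
  have h₂ := h₂.resolve_left z₂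
  right
  rcases hss S hS z₁ z₂ z₃ with h | h | h <;> order

end ShortExact

lemma ap_iff (hiso : IsoInvariant φ) {M : C} :
    Ap φ p M ↔ PhaseGE φ p M ∧ ∀ ⦃L : C⦄ (i : L ⟶ M), Mono i → PhaseLE φ p L := by
  constructor
  · rintro (hM | ⟨hM, rfl⟩)
    · exact ⟨Or.inl hM, fun L i _ => Or.inl (hM.of_mono i)⟩
    · refine ⟨Or.inr le_rfl, fun L i hi => or_iff_not_imp_left.2 fun hL => ?_⟩
      by_cases h : IsIso i
      · exact (hiso (asIso i)).le
      · exact hM i hi hL h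
  · rintro ⟨hge, hsub⟩
    refine or_iff_not_imp_left.2 fun hM => ?_
    have hp : φ M = p :=
      le_antisymm ((hsub (𝟙 M) inferInstance).resolve_left hM) (hge.resolve_left hM)
    exact ⟨fun L i hi hL _ => hp ▸ (hsub i hi).resolve_left hL, hp⟩

section Closure

variable (hss : SeeSaw φ) (hiso : IsoInvariant φ)
include hss hiso

lemma Ap.phaseGE_of_epi {M Q : C} (hM : Ap φ p M) (q : M ⟶ Q) [Epi q] : PhaseGE φ p Q :=
  have hM := (ap_iff hiso).1 hM
  hss.phaseGE_X₃ hiso (shortExact_kernel q) (hM.2 (kernel.ι q) inferInstance) hM.1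

lemma ap_kernel {M N : C} (f : M ⟶ N) (hM : Ap φ p M) (hN : Ap φ p N) :
    Ap φ p (kernel f) := by
  rw [ap_iff hiso] at hM hN ⊢
  exact ⟨hss.phaseGE_X₁ hiso (shortExact_cokernel (kernel.ι f)) hM.1
      (hN.2 (Abelian.factorThruCoimage f) inferInstance),
    fun L i _ => hM.2 (i ≫ kernel.ι f) inferInstance⟩

lemma ap_cokernel {M N : C} (f : M ⟶ N) (hM : Ap φ p M) (hN : Ap φ p N) :
    Ap φ p (cokernel f) := by
  have hC : PhaseLE φ p (cokernel f) :=
    hss.toDual.phaseGE_X₃ hiso.toDual (shortExact_kernel (cokernel.π f))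
      (hM.phaseGE_of_epi hss hiso (Abelian.factorThruImage f))
      (((ap_iff hiso).1 hN).2 (𝟙 N) inferInstance)
  refine (ap_iff hiso).2 ⟨hN.phaseGE_of_epi hss hiso (cokernel.π f), fun L j _ => ?_⟩
  exact hss.toDual.phaseGE_X₁ hiso.toDual (shortExact_cokernel j) hC
    (hN.phaseGE_of_epi hss hiso (cokernel.π f ≫ cokernel.π j))

lemma ap_X₂_of_shortExact {S : ShortComplex C} (hS : S.ShortExact) (h₁ : Ap φ p S.X₁)
    (h₃ : Ap φ p S.X₃) : Ap φ p S.X₂ := by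
  rw [ap_iff hiso] at h₁ h₃ ⊢
  refine ⟨hss.toDual.phaseLE_X₂ hiso.toDual hS h₁.1 h₃.1, fun L j _ => ?_⟩
  have := hS.mono_f
  have hk : (kernel.ι (j ≫ S.g) ≫ j) ≫ S.g = 0 := by rw [Category.assoc, kernel.condition]
  have : Mono (hS.exact.lift _ hk) := mono_of_mono_fac (hS.exact.lift_f _ hk)
  exact hss.phaseLE_X₂ hiso (shortExact_cokernel (kernel.ι (j ≫ S.g)))
    (h₁.2 (hS.exact.lift _ hk) inferInstance)
    (h₃.2 (Abelian.factorThruCoimage (j ≫ S.g)) inferInstance)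

end Closure

end

/-- `A_p` is a wide subcategory: it is closed under kernels, cokernels and extensions. -/
theorem Ap_wide {C : Type u} [Category.{v} C] [Abelian C]
    [∀ X : C, IsNoetherianObject X] [∀ X : C, IsArtinianObject X]
    {P : Type*} [LinearOrder P] (φ : C → P)
    (hss : SeeSaw φ) (hiso : IsoInvariant φ) (p : P) :
    (∀ ⦃M N : C⦄ (f : M ⟶ N), Ap φ p M → Ap φ p N → Ap φ p (kernel f)) ∧
    (∀ ⦃M N : C⦄ (f : M ⟶ N), Ap φ p M → Ap φ p N → Ap φ p (cokernel f)) ∧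
    (∀ S : ShortComplex C, S.ShortExact → Ap φ p S.X₁ → Ap φ p S.X₃ → Ap φ p S.X₂) :=
  ⟨fun _ _ f => ap_kernel hss hiso f, fun _ _ f => ap_cokernel hss hiso f,
    fun _ hS => ap_X₂_of_shortExact hss hiso hS⟩
end
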